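/- arXiv:2108.04514 — 2 statements merged into one kernel-verified Lean document; each statement's English description precedes it below -/
import Mathlib

section
/- For every $n \ge 1$, applying the composition derivation to the signature expansion of order $n$ yields the signature expansion of order $n+1$: $\sum_{w \models n} \chi(w)\, \mathrm{d}(w) = \sum_{w \models n+1} \chi(w)\, w$ in the free real vector space on compositions, where the sums are over all compositions of $n$ and of $n+1$ respectively. -/
/-!
Write a composition of `n + 1` as a head `a` followed by a composition `t` of `m = n + 1 - a`.
Then `χ(a t) = C(n + 1, m) χ(t)` and `d(a t) = (a+1) t + 1 a t + a d(t)`, so with `S_m` the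
signature expansion of order `m` and `a · x` the prepending of the letter `a` (so `0 · x = 0`),
`S_{n+1} = ∑_m C(n+1, m) (n+1-m) · S_m` and, by strong induction on `n`,
`d(S_n) = ∑_m C(n, m) ((n+1-m) · S_m + (n-m) · S_{m+1})`.
Pascal's rule `C(n+1, m) = C(n, m) + C(n, m-1)` identifies the two right-hand sides.
-/

open Finset

/-- The set of compositions of `n` (lists of positive integers summing to `n`). -/
def comps : ℕ → Finset (List ℕ+)
  | 0 => {[]}
  | n + 1 =>
    (Finset.range (n + 1)).attach.biUnion fun k =>
      (comps k.1).image fun l =>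
        (⟨n + 1 - k.1, Nat.sub_pos_of_lt (Finset.mem_range.mp k.2)⟩ : ℕ+) :: l
  decreasing_by exact Finset.mem_range.mp k.2

/-- Signature character of a composition. -/
def chi : List ℕ+ → ℕ
  | [] => 1
  | a :: t => Nat.choose ((a : ℕ) + (t.map fun x => (x : ℕ)).sum) (a : ℕ) * chi t

/-- The Pöppe product of two basis compositions `u a` and `b v`:
`(u a) * (b v) = u(a+1)bv + ua(b+1)v + 2·(ua1bv)`, as an element of the free
vector space on compositions (zero if either composition is empty). -/
noncomputable def ppWord (u v : List ℕ+) : List ℕ+ →₀ ℝ :=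
  match u.reverse, v with
  | a :: ur, b :: v' =>
      Finsupp.single (((a + 1) :: ur).reverse ++ b :: v') 1
      + Finsupp.single ((a :: ur).reverse ++ (b + 1) :: v') 1
      + (2 : ℝ) • Finsupp.single ((a :: ur).reverse ++ (1 : ℕ+) :: b :: v') 1
  | _, _ => 0

/-- The bilinear Pöppe product on the free vector space on compositions. -/
noncomputable def poppeMul (x y : List ℕ+ →₀ ℝ) : List ℕ+ →₀ ℝ :=
  x.sum fun u cu => y.sum fun v cv => (cu * cv) • ppWord u v

/-- The signature expansion of order `n`: `∑_{w ⊨ n} χ(w)·w`. -/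
noncomputable def sigExp (n : ℕ) : List ℕ+ →₀ ℝ :=
  ∑ w ∈ comps n, (chi w : ℝ) • Finsupp.single w 1

/-- The derivation of a single composition: the sum of all single-letter increments
plus the sum of all insertions of a letter `1` into the gaps. -/
noncomputable def derWord (w : List ℕ+) : List ℕ+ →₀ ℝ :=
  (∑ k ∈ Finset.range w.length,
      Finsupp.single (w.take k ++ (w.getD k 1 + 1) :: w.drop (k + 1)) (1 : ℝ))
  + ∑ k ∈ Finset.range (w.length + 1),
      Finsupp.single (w.take k ++ (1 : ℕ+) :: w.drop k) (1 : ℝ)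

/-- The derivation, extended linearly to the free vector space on compositions. -/
noncomputable def der (x : List ℕ+ →₀ ℝ) : List ℕ+ →₀ ℝ :=
  x.sum fun w c => c • derWord w

lemma comps_succ (n : ℕ) :
    comps (n + 1) = (range (n + 1)).biUnion fun k =>
      (comps k).image fun t : List ℕ+ => (n + 1 - k).toPNat' :: t := by
  rw [comps]
  conv_rhs => rw [← attach_biUnion]
  refine biUnion_congr rfl fun k _ => ?_
  have head_eq : (n + 1 - k.1).toPNat' = ⟨n + 1 - k.1, Nat.sub_pos_of_lt (mem_range.mp k.2)⟩ :=
    PNat.coe_injective (PNat.toPNat'_coe (Nat.sub_pos_of_lt (mem_range.mp k.2)))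
  rw [head_eq]

lemma sum_map_val_of_mem_comps {n : ℕ} {w : List ℕ+} (hw : w ∈ comps n) :
    (w.map PNat.val).sum = n := by
  induction n using Nat.strong_induction_on generalizing w with
  | _ n ih =>
    match n with
    | 0 =>
      rw [comps, mem_singleton] at hw
      simp [hw]
    | n + 1 =>
      simp only [comps_succ, mem_biUnion, mem_image, mem_range] at hw
      obtain ⟨k, hk, t, ht, rfl⟩ := hw
      rw [List.map_cons, List.sum_cons, ih k hk ht]
      change ((n + 1 - k).toPNat' : ℕ) + k = n + 1
      rw [PNat.toPNat'_coe (by omega)]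
      omega

lemma chi_cons (a : ℕ+) {m : ℕ} {t : List ℕ+} (ht : t ∈ comps m) :
    chi (a :: t) = ((a : ℕ) + m).choose m * chi t := by
  simp only [chi, List.pure_def, List.bind_eq_flatMap, List.map_id_fun', id_eq,
    ← List.map_eq_flatMap]
  rw [← sum_map_val_of_mem_comps ht, Nat.choose_symm_add]

lemma sum_comps_succ {M : Type*} [AddCommMonoid M] (n : ℕ) (f : List ℕ+ → M) :
    ∑ w ∈ comps (n + 1), f w
      = ∑ k ∈ range (n + 1), ∑ t ∈ comps k, f ((n + 1 - k).toPNat' :: t) := by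
  rw [comps_succ, sum_biUnion]
  · exact sum_congr rfl fun k _ => sum_image fun _ _ _ _ h => List.cons_injective h
  · intro k hk k' hk' hkk'
    simp only [Function.onFun, disjoint_left, mem_image, not_exists, not_and]
    rintro _ ⟨t, -, rfl⟩ t' - h
    have := congrArg PNat.val (List.head_eq_of_cons_eq h)
    rw [coe_range, Set.mem_Iio] at hk hk'
    rw [PNat.toPNat'_coe (by omega), PNat.toPNat'_coe (by omega)] at this
    omega

lemma sum_comps_succ_chi_smul {M : Type*} [AddCommMonoid M] [Module ℝ M] (n : ℕ)
    (g : List ℕ+ → M) :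
    ∑ w ∈ comps (n + 1), (chi w : ℝ) • g w
      = ∑ k ∈ range (n + 1), (n + 1).choose k •
          ∑ t ∈ comps k, (chi t : ℝ) • g ((n + 1 - k).toPNat' :: t) := by
  rw [sum_comps_succ]
  refine sum_congr rfl fun k hk => ?_
  have hk := mem_range.mp hk
  rw [smul_sum]
  refine sum_congr rfl fun t ht => ?_
  rw [chi_cons _ ht, PNat.toPNat'_coe (by omega), Nat.sub_add_cancel hk.le, Nat.cast_mul,
    mul_smul, Nat.cast_smul_eq_nsmul]

/-- A letter `0` cannot occur in a composition, so `prepend 0 = 0`. -/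
noncomputable def prepend (a : ℕ) : (List ℕ+ →₀ ℝ) →ₗ[ℝ] List ℕ+ →₀ ℝ :=
  if a = 0 then 0 else Finsupp.lmapDomain ℝ ℝ (a.toPNat' :: ·)

lemma prepend_zero : prepend 0 = 0 := if_pos rfl

lemma prepend_of_ne_zero {a : ℕ} (ha : a ≠ 0) :
    prepend a = Finsupp.lmapDomain ℝ ℝ (a.toPNat' :: ·) :=
  if_neg ha

lemma lmapDomain_sigExp (f : List ℕ+ → List ℕ+) (m : ℕ) :
    Finsupp.lmapDomain ℝ ℝ f (sigExp m)
      = ∑ t ∈ comps m, (chi t : ℝ) • Finsupp.single (f t) 1 := by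
  simp only [sigExp, map_sum, map_smul, Finsupp.lmapDomain_apply, Finsupp.mapDomain_single]

lemma sigExp_succ (n : ℕ) :
    sigExp (n + 1)
      = ∑ k ∈ range (n + 1), (n + 1).choose k • prepend (n + 1 - k) (sigExp k) := by
  rw [sigExp, sum_comps_succ_chi_smul]
  refine sum_congr rfl fun k hk => ?_
  rw [prepend_of_ne_zero (by grind), lmapDomain_sigExp]

lemma sigExp_one : sigExp 1 = Finsupp.single [1] 1 := by
  rw [sigExp_succ, sum_range_one, prepend_of_ne_zero (by norm_num), lmapDomain_sigExp]
  simp only [zero_add, Nat.choose_succ_self_right, comps, tsub_zero, Finsupp.smul_single,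
    smul_eq_mul, mul_one, sum_singleton, chi, Nat.cast_one, one_smul]
  rfl

lemma derWord_nil : derWord [] = Finsupp.single [1] 1 := by
  simp [derWord]

lemma derWord_cons (a : ℕ+) (t : List ℕ+) :
    derWord (a :: t) = Finsupp.single ((a + 1) :: t) 1 + Finsupp.single (1 :: a :: t) 1
      + Finsupp.lmapDomain ℝ ℝ (a :: ·) (derWord t) := by
  rw [derWord, derWord, List.length_cons, sum_range_succ' _ t.length,
    sum_range_succ' _ (t.length + 1), map_add, map_sum, map_sum]
  simp only [Finsupp.lmapDomain_apply, Finsupp.mapDomain_single, List.take_succ_cons,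
    List.drop_succ_cons, List.getD_cons_succ, List.take_zero, List.drop_zero,
    List.getD_cons_zero, List.nil_append, List.cons_append]
  abel

noncomputable def derSigExp (n : ℕ) : List ℕ+ →₀ ℝ :=
  ∑ w ∈ comps n, (chi w : ℝ) • derWord w

lemma sum_chi_smul_derWord_cons {a : ℕ} (ha : a ≠ 0) (m : ℕ) :
    ∑ t ∈ comps m, (chi t : ℝ) • derWord (a.toPNat' :: t)
      = prepend (a + 1) (sigExp m) + prepend 1 (prepend a (sigExp m))
        + prepend a (derSigExp m) := by
  have head_succ : (a + 1).toPNat' = a.toPNat' + 1 :=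
    PNat.coe_injective (by simp [Nat.pos_of_ne_zero ha])
  simp only [derWord_cons, smul_add, sum_add_distrib, derSigExp, map_sum, map_smul]
  rw [prepend_of_ne_zero a.succ_ne_zero, prepend_of_ne_zero one_ne_zero, prepend_of_ne_zero ha,
    head_succ, lmapDomain_sigExp, ← LinearMap.comp_apply, ← Finsupp.lmapDomain_comp,
    lmapDomain_sigExp]
  rfl

/-- The insertion of a leading `1` is the increment of a phantom head `0`: it is the summand
`k = n + 1` below. -/
lemma derSigExp_succ (n : ℕ) :
    derSigExp (n + 1) = ∑ k ∈ range (n + 2), (n + 1).choose k •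
      (prepend (n + 2 - k) (sigExp k) + prepend (n + 1 - k) (derSigExp k)) := by
  rw [sum_range_succ, Nat.choose_self, one_smul, Nat.sub_self, prepend_zero, LinearMap.zero_apply,
    add_zero, show n + 2 - (n + 1) = 1 by omega]
  conv_rhs => rw [sigExp_succ, map_sum]
  rw [derSigExp, sum_comps_succ_chi_smul, ← sum_add_distrib]
  refine sum_congr rfl fun k hk => ?_
  have hk := mem_range.mp hk
  rw [sum_chi_smul_derWord_cons (by omega), show n + 1 - k + 1 = n + 2 - k by omega, map_nsmul]
  simp only [smul_add]
  abel

theorem derSigExp_eq_sigExp_succ (n : ℕ) : derSigExp n = sigExp (n + 1) := by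
  induction n using Nat.strong_induction_on with
  | _ n ih =>
  cases n with
  | zero => simp [derSigExp, comps, chi, derWord_nil, sigExp_one]
  | succ n =>
    have pascal := sum_choose_succ_nsmul (fun i j => prepend j (sigExp i)) (n + 1)
    rw [sum_range_succ, Nat.sub_self, prepend_zero, LinearMap.zero_apply, smul_zero, add_zero,
      ← sigExp_succ, ← sum_add_distrib] at pascal
    rw [derSigExp_succ, pascal]
    refine sum_congr rfl fun k hk => ?_
    rw [smul_add]
    rcases Nat.lt_succ_iff_lt_or_eq.mp (mem_range.mp hk) with hk | rfl
    · rw [ih k (by omega)]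
    · rw [Nat.sub_self, prepend_zero]
      rfl

theorem der_sigExp_general (n : ℕ) :
    (∑ w ∈ comps n, (chi w : ℝ) • derWord w)
      = ∑ w ∈ comps (n + 1), (chi w : ℝ) • Finsupp.single w 1 :=
  derSigExp_eq_sigExp_succ n

/-- Applying the composition derivation to the signature expansion of order `n`
yields the signature expansion of order `n + 1`:
`∑_{w ⊨ n} χ(w) d(w) = ∑_{w ⊨ n+1} χ(w) w`. -/
theorem der_sigExp (n : ℕ) (hn : 1 ≤ n) :
    (∑ w ∈ comps n, (chi w : ℝ) • derWord w)
      = ∑ w ∈ comps (n + 1), (chi w : ℝ) • Finsupp.single w 1 :=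
  der_sigExp_general n
end

section
/- In the Pöppe algebra of compositions, for every positive integer $n$ one has the expansion $1 * n + n * 1 = 2n + n2 + 1(n{+}1) + (n{+}1)1 + 2\cdot 11n + 2\cdot n11$, where e.g. $1(n{+}1)$ denotes the two-letter composition $(1, n{+}1)$ and $11n$ the three-letter composition $(1,1,n)$. Consequently, $\mathrm{d}^2(n) - (1*n + n*1) = (n{+}2) + 1(n{+}1) + (n{+}1)1 + 2\cdot 1n1$. -/
open Finset

lemma ppWord_single (a b : ℕ+) : ppWord [a] [b] =
    Finsupp.single [a+1,b] 1 + Finsupp.single [a,b+1] 1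
      + (2:ℝ) • Finsupp.single [a,1,b] 1 := rfl

lemma poppeMul_single (u v : List ℕ+) :
    poppeMul (Finsupp.single u 1) (Finsupp.single v 1) = ppWord u v := by
  simp [poppeMul, Finsupp.sum_single_index]

lemma der_single (w : List ℕ+) : der (Finsupp.single w 1) = derWord w := by
  simp [der, Finsupp.sum_single_index]

lemma der_add (x y : List ℕ+ →₀ ℝ) : der (x + y) = der x + der y :=
  Finsupp.sum_add_index (by simp) (by simp [add_smul])

lemma derWord_one (a : ℕ+) : derWord [a] =
    Finsupp.single [a+1] 1 + Finsupp.single [1,a] 1 + Finsupp.single [a,1] 1 := by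
  simp [derWord, Finset.sum_range_succ]
  abel

lemma derWord_two (a b : ℕ+) : derWord [a,b] =
    Finsupp.single [a+1,b] 1 + Finsupp.single [a,b+1] 1
      + Finsupp.single [1,a,b] 1 + Finsupp.single [a,1,b] 1
      + Finsupp.single [a,b,1] 1 := by
  simp [derWord, Finset.sum_range_succ]
  abel

/-- In the Pöppe algebra, for every positive integer `n`:
`1 * n + n * 1 = 2n + n2 + 1(n+1) + (n+1)1 + 2·11n + 2·n11`, and consequently
`d²(n) - (1*n + n*1) = (n+2) + 1(n+1) + (n+1)1 + 2·1n1`. -/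
theorem lax_iteration_expansion (n : ℕ+) :
    poppeMul (Finsupp.single [(1 : ℕ+)] 1) (Finsupp.single [n] 1)
        + poppeMul (Finsupp.single [n] 1) (Finsupp.single [(1 : ℕ+)] 1)
      = Finsupp.single [(2 : ℕ+), n] 1 + Finsupp.single [n, (2 : ℕ+)] 1
        + Finsupp.single [(1 : ℕ+), n + 1] 1 + Finsupp.single [n + 1, (1 : ℕ+)] 1
        + (2 : ℝ) • Finsupp.single [(1 : ℕ+), 1, n] 1
        + (2 : ℝ) • Finsupp.single [n, (1 : ℕ+), 1] 1 ∧
    der (der (Finsupp.single [n] 1))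
        - (poppeMul (Finsupp.single [(1 : ℕ+)] 1) (Finsupp.single [n] 1)
            + poppeMul (Finsupp.single [n] 1) (Finsupp.single [(1 : ℕ+)] 1))
      = Finsupp.single [n + 2] 1 + Finsupp.single [(1 : ℕ+), n + 1] 1
        + Finsupp.single [n + 1, (1 : ℕ+)] 1
        + (2 : ℝ) • Finsupp.single [(1 : ℕ+), n, 1] 1 := by
  have h11 : (1:ℕ+) + 1 = 2 := rfl
  constructor
  · rw [poppeMul_single, poppeMul_single, ppWord_single, ppWord_single, h11]
    abel
  · rw [der_single, derWord_one, der_add, der_add, der_single, der_single,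
      der_single, derWord_one, derWord_two, derWord_two,
      poppeMul_single, poppeMul_single, ppWord_single, ppWord_single]
    simp only [add_assoc, h11]
    module
end
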